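/- arXiv:2204.02671 — 2 statements merged into one kernel-verified Lean document; each statement's English description precedes it below -/
import Mathlib

section
/- Let F and F̃ be real p×m matrices. Then the subspaces V = Image [I; F] and W = Image [I; F̃] of ℝ^{m+p} (where [I; F] denotes the block matrix stacking the m×m identity on top of F) satisfy: the gap between V and W (the operator 2-norm of the difference of orthogonal projections onto V and W) is at most ‖F − F̃‖₂. -/
open Matrix

/-- Operator (spectral) norm of a real matrix, induced by Euclidean norms. -/
noncomputable def specNorm {p m : Type*} [Fintype p] [Fintype m] [DecidableEq m]
    (A : Matrix p m ℝ) : ℝ :=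
  ‖LinearMap.toContinuousLinearMap (Matrix.toEuclideanLin A)‖

/-- The orthogonal projection onto a subspace, as an endomorphism. -/
noncomputable def projCLM {N : Type*} [Fintype N] [DecidableEq N]
    (V : Submodule ℝ (EuclideanSpace ℝ N)) :
    EuclideanSpace ℝ N →L[ℝ] EuclideanSpace ℝ N :=
  V.subtypeL.comp (Submodule.orthogonalProjection V)

/-- The gap between two subspaces of ℝ^N. -/
noncomputable def gap {N : Type*} [Fintype N] [DecidableEq N]
    (V W : Submodule ℝ (EuclideanSpace ℝ N)) : ℝ :=
  ‖projCLM V - projCLM W‖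


/-!
If `v = [I; F] x`, then `[I; F̃] x` is a point of `W` at distance `‖(F - F̃) x‖ ≤ ‖F - F̃‖ ‖x‖`
from `v`, and `‖x‖ ≤ ‖v‖`; so every vector of `V` lies within `‖F - F̃‖` times its norm of `W`,
and symmetrically. For two closed subspaces this two-sided bound by `K` already gives
`‖P_V - P_W‖ ≤ K`: the difference of projections sends `P_V u` and `u - P_V u` to orthogonal
vectors, of norms at most `K ‖P_V u‖` and `K ‖u - P_V u‖`.
-/

open scoped InnerProductSpace

namespace Submodule

variable {𝕜 E : Type*} [RCLike 𝕜] [NormedAddCommGroup E] [InnerProductSpace 𝕜 E]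
  {U V W : Submodule 𝕜 E} [U.HasOrthogonalProjection] [V.HasOrthogonalProjection]
  [W.HasOrthogonalProjection] {K : ℝ}

theorem norm_sub_starProjection_le_norm_sub (y : E) {x : E} (hx : x ∈ U) :
    ‖y - U.starProjection y‖ ≤ ‖y - x‖ := by
  rw [starProjection_minimal]
  exact ciInf_le ⟨0, by rintro _ ⟨z, rfl⟩; positivity⟩ (⟨x, hx⟩ : U)

/-- With `w = W.starProjection z`, `‖w‖ ^ 2 = re ⟪w, z⟫ = re ⟪w - V.starProjection w, z⟫`
because `z ⊥ V`. -/
theorem norm_starProjection_le_of_mem_orthogonal (hK : 0 ≤ K)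
    (hWV : ∀ w ∈ W, ‖w - V.starProjection w‖ ≤ K * ‖w‖) {z : E} (hz : z ∈ Vᗮ) :
    ‖W.starProjection z‖ ≤ K * ‖z‖ := by
  set w := W.starProjection z
  have hw : w ∈ W := W.starProjection_apply_mem z
  have hnorm_sq : ‖w‖ ^ 2 = RCLike.re ⟪w - V.starProjection w, z⟫_𝕜 := by
    have hVz : ⟪V.starProjection w, z⟫_𝕜 = 0 :=
      (V.mem_orthogonal z).mp hz _ (V.starProjection_apply_mem w)
    have hwz : ⟪w, z⟫_𝕜 = ⟪w, w⟫_𝕜 := by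
      rw [← W.inner_starProjection_left_eq_right, W.starProjection_mem_subspace_eq_self ⟨w, hw⟩]
    rw [inner_sub_left, hVz, sub_zero, hwz, inner_self_eq_norm_sq]
  have hsq : ‖w‖ * ‖w‖ ≤ (K * ‖z‖) * ‖w‖ := by
    calc ‖w‖ * ‖w‖ = RCLike.re ⟪w - V.starProjection w, z⟫_𝕜 := by rw [← sq, hnorm_sq]
      _ ≤ ‖w - V.starProjection w‖ * ‖z‖ := re_inner_le_norm _ _
      _ ≤ K * ‖w‖ * ‖z‖ := mul_le_mul_of_nonneg_right (hWV w hw) (norm_nonneg z)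
      _ = (K * ‖z‖) * ‖w‖ := by ring
  rcases (norm_nonneg w).eq_or_lt with hw0 | hw0
  · rw [← hw0]
    positivity
  · exact le_of_mul_le_mul_right hsq hw0

theorem norm_starProjection_sub_starProjection_le (hK : 0 ≤ K)
    (hVW : ∀ v ∈ V, ‖v - W.starProjection v‖ ≤ K * ‖v‖)
    (hWV : ∀ w ∈ W, ‖w - V.starProjection w‖ ≤ K * ‖w‖) :
    ‖V.starProjection - W.starProjection‖ ≤ K := by
  refine ContinuousLinearMap.opNorm_le_bound _ hK fun u ↦ ?_
  set a := V.starProjection u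
  set b := Vᗮ.starProjection u
  have hsplit : (V.starProjection - W.starProjection) u
      = (a - W.starProjection a) - W.starProjection b := by
    have hu : u = a + b := (V.starProjection_add_starProjection_orthogonal u).symm
    rw [_root_.sub_apply]
    nth_rewrite 2 [hu]
    rw [map_add]
    abel
  have horth : ⟪a - W.starProjection a, W.starProjection b⟫_𝕜 = 0 :=
    (W.mem_orthogonal' _).mp (W.sub_starProjection_mem_orthogonal a) _
      (W.starProjection_apply_mem b)
  have ha : ‖a - W.starProjection a‖ ≤ K * ‖a‖ := hVW a (V.starProjection_apply_mem u)
  have hb : ‖W.starProjection b‖ ≤ K * ‖b‖ :=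
    norm_starProjection_le_of_mem_orthogonal hK hWV (Vᗮ.starProjection_apply_mem u)
  have hu : ‖u‖ ^ 2 = ‖a‖ ^ 2 + ‖b‖ ^ 2 := V.norm_sq_eq_add_norm_sq_starProjection u
  refine le_of_sq_le_sq ?_ (by positivity)
  calc ‖(V.starProjection - W.starProjection) u‖ ^ 2
      = ‖a - W.starProjection a‖ ^ 2 + ‖W.starProjection b‖ ^ 2 := by
        rw [hsplit, @norm_sub_sq 𝕜, horth, map_zero]; ring
    _ ≤ (K * ‖a‖) ^ 2 + (K * ‖b‖) ^ 2 := by gcongr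
    _ = (K * ‖u‖) ^ 2 := by rw [mul_pow, mul_pow, mul_pow, hu]; ring

end Submodule

theorem Matrix.norm_sq_toEuclideanLin_fromRows {𝕜 n p₁ p₂ : Type*} [RCLike 𝕜] [Fintype n]
    [DecidableEq n] [Fintype p₁] [Fintype p₂] (A : Matrix p₁ n 𝕜) (B : Matrix p₂ n 𝕜)
    (x : EuclideanSpace 𝕜 n) :
    ‖toEuclideanLin (fromRows A B) x‖ ^ 2
      = ‖toEuclideanLin A x‖ ^ 2 + ‖toEuclideanLin B x‖ ^ 2 := by
  simp only [EuclideanSpace.norm_sq_eq, Fintype.sum_sum_type, toLpLin_apply,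
    fromRows_mulVec, Sum.elim_inl, Sum.elim_inr]

section GraphSubspace

variable {m p : Type*} [Fintype m] [Fintype p] [DecidableEq m]

theorem specNorm_nonneg (A : Matrix p m ℝ) : 0 ≤ specNorm A := norm_nonneg _

theorem specNorm_sub_comm (A B : Matrix p m ℝ) : specNorm (A - B) = specNorm (B - A) := by
  rw [specNorm, specNorm, ← neg_sub, map_neg, map_neg, norm_neg]

theorem norm_toEuclideanLin_le_specNorm (A : Matrix p m ℝ) (x : EuclideanSpace ℝ m) :
    ‖toEuclideanLin A x‖ ≤ specNorm A * ‖x‖ :=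
  (LinearMap.toContinuousLinearMap (toEuclideanLin A)).le_opNorm x

theorem norm_le_norm_toEuclideanLin_fromRows_one (F : Matrix p m ℝ) (x : EuclideanSpace ℝ m) :
    ‖x‖ ≤ ‖toEuclideanLin (fromRows (1 : Matrix m m ℝ) F) x‖ := by
  refine le_of_sq_le_sq ?_ (norm_nonneg _)
  rw [norm_sq_toEuclideanLin_fromRows, toLpLin_one, LinearMap.id_apply]
  exact le_add_of_nonneg_right (sq_nonneg _)

theorem norm_toEuclideanLin_fromRows_one_sub (F G : Matrix p m ℝ) (x : EuclideanSpace ℝ m) :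
    ‖toEuclideanLin (fromRows (1 : Matrix m m ℝ) F) x
        - toEuclideanLin (fromRows (1 : Matrix m m ℝ) G) x‖ = ‖toEuclideanLin (F - G) x‖ := by
  have hdiff : fromRows (1 : Matrix m m ℝ) F - fromRows 1 G = fromRows 0 (F - G) := by
    ext (i | i) j <;> simp
  rw [← LinearMap.sub_apply, ← map_sub, hdiff, ← sq_eq_sq₀ (norm_nonneg _) (norm_nonneg _),
    norm_sq_toEuclideanLin_fromRows, map_zero, LinearMap.zero_apply, norm_zero]
  ring

noncomputable def graphSubspace (F : Matrix p m ℝ) : Submodule ℝ (EuclideanSpace ℝ (m ⊕ p)) :=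
  LinearMap.range (toEuclideanLin (fromRows (1 : Matrix m m ℝ) F))

theorem norm_sub_starProjection_graphSubspace_le (F G : Matrix p m ℝ)
    {v : EuclideanSpace ℝ (m ⊕ p)} (hv : v ∈ graphSubspace F) :
    ‖v - (graphSubspace G).starProjection v‖ ≤ specNorm (F - G) * ‖v‖ := by
  obtain ⟨x, rfl⟩ := hv
  calc _ ≤ ‖toEuclideanLin (fromRows (1 : Matrix m m ℝ) F) x
          - toEuclideanLin (fromRows (1 : Matrix m m ℝ) G) x‖ :=
        Submodule.norm_sub_starProjection_le_norm_sub _ (LinearMap.mem_range_self _ x)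
    _ = ‖toEuclideanLin (F - G) x‖ := norm_toEuclideanLin_fromRows_one_sub F G x
    _ ≤ specNorm (F - G) * ‖x‖ := norm_toEuclideanLin_le_specNorm _ x
    _ ≤ specNorm (F - G) * ‖toEuclideanLin (fromRows (1 : Matrix m m ℝ) F) x‖ := by
        gcongr
        · exact specNorm_nonneg _
        · exact norm_le_norm_toEuclideanLin_fromRows_one F x

end GraphSubspace

theorem gap_image_le {m p : ℕ} (F Ft : Matrix (Fin p) (Fin m) ℝ) :
    gap (LinearMap.range (Matrix.toEuclideanLin (Matrix.fromRows (1 : Matrix (Fin m) (Fin m) ℝ) F)))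
        (LinearMap.range (Matrix.toEuclideanLin (Matrix.fromRows (1 : Matrix (Fin m) (Fin m) ℝ) Ft)))
      ≤ specNorm (F - Ft) :=
  Submodule.norm_starProjection_sub_starProjection_le (specNorm_nonneg _)
    (fun _ ↦ norm_sub_starProjection_graphSubspace_le F Ft)
    (specNorm_sub_comm Ft F ▸ fun _ ↦ norm_sub_starProjection_graphSubspace_le Ft F)
end

section
/- Let V and W be subspaces of ℝ^N with orthogonal projections P_V and P_W. Then ‖P_V − P_W‖₂ = max{ ‖(I − P_W) P_V‖₂ , ‖(I − P_V) P_W‖₂ }. -/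
open Matrix

/-!
Write `P`, `Q` for the projections onto `V`, `W`. Splitting `(P - Q) x` along `W ⊕ Wᗮ` gives the
orthogonal pieces `Qᗮ P (P x)` and `-Q Pᗮ (Pᗮ x)`, so by Pythagoras (twice)
`‖(P - Q) x‖² ≤ max(‖Qᗮ P‖, ‖Q Pᗮ‖)² (‖P x‖² + ‖Pᗮ x‖²) = max(…)² ‖x‖²`, and `‖Q Pᗮ‖ = ‖Pᗮ Q‖`
because the two operators are adjoint. Conversely `Qᗮ P = Qᗮ (P - Q)` and `‖Qᗮ‖ ≤ 1`.
-/

namespace Submodule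

variable {𝕜 E : Type*} [RCLike 𝕜] [NormedAddCommGroup E] [InnerProductSpace 𝕜 E]
  (K L : Submodule 𝕜 E) [K.HasOrthogonalProjection] [L.HasOrthogonalProjection]

theorem norm_orthogonal_starProjection_mul_starProjection_le :
    ‖Lᗮ.starProjection * K.starProjection‖ ≤ ‖K.starProjection - L.starProjection‖ := by
  have hL := L.isIdempotentElem_starProjection.eq
  have h : Lᗮ.starProjection * K.starProjection =
      Lᗮ.starProjection * (K.starProjection - L.starProjection) := by
    simp only [starProjection_orthogonal', sub_mul, mul_sub, one_mul, hL, sub_self, sub_zero]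
  rw [h]
  exact (norm_mul_le _ _).trans (mul_le_of_le_one_left (norm_nonneg _) (starProjection_norm_le _))

theorem norm_sq_sub_starProjection_apply (x : E) :
    ‖(K.starProjection - L.starProjection) x‖ ^ 2 =
      ‖(Lᗮ.starProjection * K.starProjection) (K.starProjection x)‖ ^ 2 +
        ‖(L.starProjection * Kᗮ.starProjection) (Kᗮ.starProjection x)‖ ^ 2 := by
  have hK := K.isIdempotentElem_starProjection.eq
  have hL := L.isIdempotentElem_starProjection.eq
  have h_onto_Lperp : Lᗮ.starProjection * (K.starProjection - L.starProjection) =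
      Lᗮ.starProjection * K.starProjection * K.starProjection := by
    simp only [starProjection_orthogonal', sub_mul, mul_sub, one_mul, mul_assoc, hK, hL, sub_self,
      sub_zero]
  have h_onto_L : -(L.starProjection * (K.starProjection - L.starProjection)) =
      L.starProjection * Kᗮ.starProjection * Kᗮ.starProjection := by
    simp only [starProjection_orthogonal', sub_mul, mul_sub, mul_one, mul_assoc, hK, hL, sub_self,
      sub_zero, neg_sub]
  rw [norm_sq_eq_add_norm_sq_starProjection _ L, add_comm, ← norm_neg (L.starProjection _)]
  exact congrArg₂ (‖·‖ ^ 2 + ‖·‖ ^ 2) (DFunLike.congr_fun h_onto_Lperp x)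
    (DFunLike.congr_fun h_onto_L x)

theorem norm_sub_starProjection_le_max :
    ‖K.starProjection - L.starProjection‖ ≤
      max ‖Lᗮ.starProjection * K.starProjection‖ ‖L.starProjection * Kᗮ.starProjection‖ := by
  set M := max ‖Lᗮ.starProjection * K.starProjection‖ ‖L.starProjection * Kᗮ.starProjection‖
  have hM : 0 ≤ M := le_max_of_le_left (norm_nonneg _)
  refine ContinuousLinearMap.opNorm_le_bound _ hM fun x => ?_
  rw [← sq_le_sq₀ (norm_nonneg _) (by positivity)]
  calc ‖(K.starProjection - L.starProjection) x‖ ^ 2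
      = ‖(Lᗮ.starProjection * K.starProjection) (K.starProjection x)‖ ^ 2 +
          ‖(L.starProjection * Kᗮ.starProjection) (Kᗮ.starProjection x)‖ ^ 2 :=
        norm_sq_sub_starProjection_apply K L x
    _ ≤ (M * ‖K.starProjection x‖) ^ 2 + (M * ‖Kᗮ.starProjection x‖) ^ 2 := by
        gcongr
        · exact ContinuousLinearMap.le_of_opNorm_le _ (le_max_left _ _) _
        · exact ContinuousLinearMap.le_of_opNorm_le _ (le_max_right _ _) _
    _ = (M * ‖x‖) ^ 2 := by
        rw [mul_pow, mul_pow, mul_pow, ← mul_add, ← norm_sq_eq_add_norm_sq_starProjection]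

theorem norm_sub_starProjection_eq_max [CompleteSpace E] :
    ‖K.starProjection - L.starProjection‖ =
      max ‖Lᗮ.starProjection * K.starProjection‖ ‖Kᗮ.starProjection * L.starProjection‖ := by
  have h_adjoint :
      ‖L.starProjection * Kᗮ.starProjection‖ = ‖Kᗮ.starProjection * L.starProjection‖ := by
    rw [← norm_star, star_mul, (isSelfAdjoint_starProjection _).star_eq,
      (isSelfAdjoint_starProjection _).star_eq]
  refine le_antisymm (h_adjoint ▸ norm_sub_starProjection_le_max K L) (max_le ?_ ?_)
  · exact norm_orthogonal_starProjection_mul_starProjection_le K L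
  · rw [norm_sub_rev]
    exact norm_orthogonal_starProjection_mul_starProjection_le L K

end Submodule

theorem gap_eq_max_directed {N : ℕ} (V W : Submodule ℝ (EuclideanSpace ℝ (Fin N))) :
    ‖projCLM V - projCLM W‖ =
      max ‖(ContinuousLinearMap.id ℝ (EuclideanSpace ℝ (Fin N)) - projCLM W).comp (projCLM V)‖
          ‖(ContinuousLinearMap.id ℝ (EuclideanSpace ℝ (Fin N)) - projCLM V).comp (projCLM W)‖ := by
  have h_projCLM (U : Submodule ℝ (EuclideanSpace ℝ (Fin N))) : projCLM U = U.starProjection := rfl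
  simp only [h_projCLM, ← Submodule.starProjection_orthogonal]
  exact V.norm_sub_starProjection_eq_max W
end
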